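/- arXiv:math/0002147 — 2 statements merged into one kernel-verified Lean document; each statement's English description precedes it below -/
import Mathlib

section
/- Let E₁, E₂ be two disjoint compact subsets of ℂ such that Eᵢ = −Eᵢ for i = 1, 2, and such that ℂ ∖ (E₁ ∪ E₂) has exactly two connected components, one of them containing 0 and the other one unbounded. Set Eᵢ² = {z² : z ∈ Eᵢ} for i = 1, 2. Then E₁² and E₂² are disjoint compact subsets of ℂ, and ℂ ∖ (E₁² ∪ E₂²) has exactly two connected components, one of them containing 0 and the other one unbounded. -/
open Set

/-- `Eᶜ` has exactly two connected components: `U`, which contains `0`, and `V`, which is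
unbounded. (Two disjoint open connected sets covering `Eᶜ` are exactly its components.) -/
def TwoComplComps (E U V : Set ℂ) : Prop :=
  IsOpen U ∧ IsOpen V ∧ IsConnected U ∧ IsConnected V ∧ Disjoint U V ∧
    Eᶜ = U ∪ V ∧ (0 : ℂ) ∈ U ∧ ¬ Bornology.IsBounded V

lemma isOpenMap_sq : IsOpenMap (fun z : ℂ => z ^ 2) := by
  have hg : AnalyticOnNhd ℂ (fun z : ℂ => z ^ 2) Set.univ := fun z _ => (analyticAt_id).pow 2
  rcases hg.is_constant_or_isOpen isPreconnected_univ with ⟨w, hw⟩ | h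
  · have h0 := hw 0 trivial
    have h1 := hw 1 trivial
    simp at h0 h1
    rw [← h1] at h0
    norm_num at h0
  · intro s hs
    exact h s (Set.subset_univ s) hs

/-- If `E₁, E₂` are disjoint compact symmetric sets whose complement has exactly two
components (one containing `0`, one unbounded), then the sets of squares `E₁², E₂²` are
disjoint compact sets whose complement again has exactly two components, one containing `0`
and the other unbounded. -/
theorem squares_of_symmetric_pair (E1 E2 : Set ℂ)
    (hc1 : IsCompact E1) (hc2 : IsCompact E2) (hdisj : Disjoint E1 E2)
    (hs1 : E1 = -E1) (hs2 : E2 = -E2)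
    (hcomp : ∃ U V : Set ℂ, TwoComplComps (E1 ∪ E2) U V) :
    Disjoint ((fun z : ℂ => z ^ 2) '' E1) ((fun z : ℂ => z ^ 2) '' E2) ∧
    IsCompact ((fun z : ℂ => z ^ 2) '' E1) ∧ IsCompact ((fun z : ℂ => z ^ 2) '' E2) ∧
    ∃ U V : Set ℂ,
      TwoComplComps (((fun z : ℂ => z ^ 2) '' E1) ∪ ((fun z : ℂ => z ^ 2) '' E2)) U V := by
  obtain ⟨U, V, hoU, hoV, hcU, hcV, hUV, hcompl, h0U, hVub⟩ := hcomp
  -- symmetry of E1, E2 as membership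
  have hn1 : ∀ z : ℂ, z ∈ E1 → -z ∈ E1 := by
    intro z hz
    rw [hs1, Set.mem_neg, neg_neg]; exact hz
  have hn2 : ∀ z : ℂ, z ∈ E2 → -z ∈ E2 := by
    intro z hz
    rw [hs2, Set.mem_neg, neg_neg]; exact hz
  have hnE : ∀ z : ℂ, z ∈ E1 ∪ E2 → -z ∈ E1 ∪ E2 := by
    rintro z (hz | hz)
    · exact Or.inl (hn1 z hz)
    · exact Or.inr (hn2 z hz)
  -- squares are equal iff equal up to sign
  have hsq : ∀ z w : ℂ, z ^ 2 = w ^ 2 → z = w ∨ z = -w := fun z w h =>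
    sq_eq_sq_iff_eq_or_eq_neg.1 h
  -- disjointness of images
  have hdisj' : Disjoint ((fun z : ℂ => z ^ 2) '' E1) ((fun z : ℂ => z ^ 2) '' E2) := by
    rw [Set.disjoint_left]
    rintro w ⟨z1, hz1, rfl⟩ ⟨z2, hz2, hz⟩
    rcases hsq z2 z1 hz with rfl | rfl
    · exact hdisj.ne_of_mem hz1 hz2 rfl
    · exact hdisj.ne_of_mem hz1 (hn2 _ hz2) (neg_neg z1).symm
  refine ⟨hdisj', hc1.image (continuous_pow 2), hc2.image (continuous_pow 2), ?_⟩
  -- U and V are symmetric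
  have hUsub : (fun z : ℂ => -z) '' U ⊆ U := by
    apply (hcU.isPreconnected.image _ continuous_neg.continuousOn).subset_left_of_subset_union
      hoU hoV hUV
    · rintro z ⟨w, hw, rfl⟩
      have : -w ∈ (E1 ∪ E2)ᶜ := fun h => by
        have := hnE _ h
        rw [neg_neg] at this
        exact (hcompl ▸ Set.mem_union_left V hw : w ∈ (E1 ∪ E2)ᶜ) this
      rw [hcompl] at this
      exact this
    · exact ⟨0, ⟨0, h0U, neg_zero⟩, h0U⟩
  have hUneg : ∀ z ∈ U, -z ∈ U := fun z hz => hUsub ⟨z, hz, rfl⟩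
  have hVneg : ∀ z ∈ V, -z ∈ V := by
    have hVsub : (fun z : ℂ => -z) '' V ⊆ U ∪ V := by
      rintro z ⟨w, hw, rfl⟩
      have : -w ∈ (E1 ∪ E2)ᶜ := fun h => by
        have := hnE _ h
        rw [neg_neg] at this
        exact (hcompl ▸ Set.mem_union_right U hw : w ∈ (E1 ∪ E2)ᶜ) this
      rw [hcompl] at this
      exact this
    by_cases hne : (((fun z : ℂ => -z) '' V) ∩ V).Nonempty
    · have := (hcV.isPreconnected.image _ continuous_neg.continuousOn).subset_right_of_subset_union
        hoU hoV hUV hVsub hne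
      exact fun z hz => this ⟨z, hz, rfl⟩
    · exfalso
      have hsubU : (fun z : ℂ => -z) '' V ⊆ U := by
        intro z hz
        rcases hVsub hz with h | h
        · exact h
        · exact absurd ⟨z, hz, h⟩ hne
      obtain ⟨z, hz⟩ := hcV.nonempty
      have : -z ∈ U := hsubU ⟨z, hz, rfl⟩
      have : z ∈ U := by have := hUneg _ this; rwa [neg_neg] at this
      exact hUV.ne_of_mem this hz rfl
  -- the new components
  refine ⟨(fun z : ℂ => z ^ 2) '' U, (fun z : ℂ => z ^ 2) '' V,
    isOpenMap_sq U hoU, isOpenMap_sq V hoV,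
    hcU.image _ (continuous_pow 2).continuousOn, hcV.image _ (continuous_pow 2).continuousOn,
    ?_, ?_, ⟨0, h0U, by norm_num⟩, ?_⟩
  · -- disjointness of image components
    rw [Set.disjoint_left]
    rintro w ⟨z1, hz1, rfl⟩ ⟨z2, hz2, hz⟩
    rcases hsq z2 z1 hz with rfl | rfl
    · exact hUV.ne_of_mem hz1 hz2 rfl
    · exact hUV.ne_of_mem hz1 (hVneg _ hz2) (neg_neg z1).symm
  · -- complement equality
    ext w
    simp only [Set.mem_compl_iff, Set.mem_union]
    constructor
    · intro hw
      obtain ⟨z, hz⟩ := IsAlgClosed.exists_pow_nat_eq (k := ℂ) w zero_lt_two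
      have hzE : z ∈ (E1 ∪ E2)ᶜ := by
        intro h
        rcases h with h | h
        · exact hw (Or.inl ⟨z, h, hz⟩)
        · exact hw (Or.inr ⟨z, h, hz⟩)
      rw [hcompl] at hzE
      rcases hzE with h | h
      · exact Or.inl ⟨z, h, hz⟩
      · exact Or.inr ⟨z, h, hz⟩
    · rintro (⟨z, hz, rfl⟩ | ⟨z, hz, rfl⟩) h <;>
      · rcases h with ⟨y, hy, hy2⟩ | ⟨y, hy, hy2⟩ <;>
        · have hzE : z ∉ E1 ∪ E2 := by
            have : z ∈ (E1 ∪ E2)ᶜ := by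
              rw [hcompl]
              first
                | exact Or.inl hz
                | exact Or.inr hz
            exact this
          rcases hsq y z hy2 with rfl | rfl
          · exact hzE (by first | exact Or.inl hy | exact Or.inr hy)
          · have := hnE (-z) (by first | exact Or.inl hy | exact Or.inr hy)
            rw [neg_neg] at this
            exact hzE this
  · -- unboundedness
    intro hb
    apply hVub
    rw [isBounded_iff_forall_norm_le] at hb ⊢
    obtain ⟨r, hr⟩ := hb
    refine ⟨max 1 r, fun z hz => ?_⟩
    have h2 := hr (z ^ 2) ⟨z, hz, rfl⟩
    rw [norm_pow] at h2
    by_contra hlt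
    push_neg at hlt
    have h1 : (1 : ℝ) < ‖z‖ := lt_of_le_of_lt (le_max_left 1 r) hlt
    have h3 : r < ‖z‖ := lt_of_le_of_lt (le_max_right 1 r) hlt
    nlinarith [norm_nonneg z]
end

section
/- Let S ⊆ ℂ and let f, g, h : S → ℂ be functions with h nowhere zero on S. Let φ be the Weierstrass vector of (f, g) and φ̃ the Weierstrass vector of (f·h, g/h). If τ > 1 and |h(z) − 1| ≤ 1/τ for all z ∈ S, then ‖φ̃(z) − φ(z)‖ ≤ ‖φ(z)‖/(τ − 1) for all z ∈ S. -/
/-!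
The Weierstrass vector is linear in `(f, f g², f g)` with constant coefficient vectors, and the
perturbation `(f, g) ↦ (f h, g/h)` fixes `f g`. Hence `φ̃ − φ = f (h − 1)·a + f g² (1 − h⁻¹)·b`
with `‖a‖ = ‖b‖ = 1/√2`, while `‖φ‖ = |f| (1 + |g|²)/√2`. Both `|h − 1|` and `|h⁻¹ − 1|` are at
most `1/(τ − 1)` once `|h − 1| ≤ 1/τ`, so the triangle inequality gives the bound.
-/

noncomputable def Wvec (f g : ℂ) : EuclideanSpace ℂ (Fin 3) :=
  (WithLp.equiv 2 (Fin 3 → ℂ)).symm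
    ![f / 2 * (1 - g ^ 2), Complex.I * f / 2 * (1 + g ^ 2), f * g]

open Complex

lemma EuclideanSpace.norm_vec3 {𝕜 : Type*} [RCLike 𝕜] (x y z : 𝕜) :
    ‖!₂[x, y, z]‖ = √(‖x‖ ^ 2 + ‖y‖ ^ 2 + ‖z‖ ^ 2) := by
  simp [EuclideanSpace.norm_eq, Fin.sum_univ_three]

lemma norm_Wvec (f g : ℂ) : ‖Wvec f g‖ = ‖f‖ * (1 + ‖g‖ ^ 2) / √2 := by
  have hpar := parallelogram_law_with_norm ℝ (1 : ℂ) (g ^ 2)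
  rw [Wvec, WithLp.equiv_symm_apply, EuclideanSpace.norm_vec3, eq_div_iff (by positivity),
    ← Real.sqrt_mul_self (by positivity : (0 : ℝ) ≤ ‖f‖ * (1 + ‖g‖ ^ 2)),
    ← Real.sqrt_mul (by positivity)]
  congr 1
  simp only [norm_mul, norm_div, norm_I, Complex.norm_two, norm_pow, norm_one, one_mul] at hpar ⊢
  linear_combination (‖f‖ ^ 2 / 2) * hpar

lemma norm_vec3_half_of_norm_eq_one {s : ℂ} (hs : ‖s‖ = 1) : ‖!₂[(1 : ℂ) / 2, s / 2, 0]‖ = 1 / √2 := by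
  simp only [EuclideanSpace.norm_vec3, norm_div, hs, norm_one, norm_zero, Complex.norm_two]
  rw [one_div √2, ← Real.sqrt_inv]
  norm_num

lemma Wvec_mul_div_sub_Wvec (f g : ℂ) {h : ℂ} (hh : h ≠ 0) :
    Wvec (f * h) (g / h) - Wvec f g =
      (f * (h - 1)) • !₂[1 / 2, I / 2, 0] + (f * g ^ 2 * (1 - h⁻¹)) • !₂[1 / 2, -I / 2, 0] := by
  ext i
  fin_cases i <;> simp [Wvec] <;> field_simp <;> ring

lemma norm_Wvec_mul_div_sub_Wvec_le (f g : ℂ) {h : ℂ} (hh : h ≠ 0) :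
    ‖Wvec (f * h) (g / h) - Wvec f g‖ ≤ ‖f‖ / √2 * (‖h - 1‖ + ‖g‖ ^ 2 * ‖h⁻¹ - 1‖) := by
  rw [Wvec_mul_div_sub_Wvec f g hh]
  refine (norm_add_le _ _).trans_eq ?_
  rw [norm_smul, norm_smul, norm_vec3_half_of_norm_eq_one (by simp), norm_vec3_half_of_norm_eq_one (by simp), norm_mul,
    norm_mul, norm_mul, norm_pow, norm_sub_rev 1]
  ring

lemma norm_inv_sub_one_le {𝕜 : Type*} [NormedDivisionRing 𝕜] {x : 𝕜} {ε : ℝ} (hε : ε < 1)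
    (hx : ‖x - 1‖ ≤ ε) : ‖x⁻¹ - 1‖ ≤ ε / (1 - ε) := by
  have hnorm : 1 - ε ≤ ‖x‖ := by
    have := norm_sub_norm_le (1 : 𝕜) (1 - x)
    rw [norm_one, sub_sub_cancel, norm_sub_rev] at this
    linarith
  have hx0 : x ≠ 0 := norm_pos_iff.mp (by linarith)
  have : x⁻¹ - 1 = x⁻¹ * (1 - x) := by rw [mul_sub, inv_mul_cancel₀ hx0, mul_one]
  rw [this, norm_mul, norm_inv, norm_sub_rev, inv_mul_eq_div]
  exact div_le_div₀ (by linarith [norm_nonneg (x - 1)]) hx (by linarith) hnorm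

theorem weierstrass_perturbation_close_general (S : Set ℂ) (f g h : ℂ → ℂ) (τ : ℝ)
    (hτ : 1 < τ)
    (hb : ∀ z ∈ S, ‖h z - 1‖ ≤ 1 / τ) :
    ∀ z ∈ S, ‖Wvec (f z * h z) (g z / h z) - Wvec (f z) (g z)‖ ≤
      ‖Wvec (f z) (g z)‖ / (τ - 1) := by
  intro z hz
  have hτ' : 1 / τ < 1 := by rw [div_lt_one] <;> linarith
  have hh : h z ≠ 0 := by
    rintro h0
    have := hb z hz
    rw [h0, zero_sub, norm_neg, norm_one] at this
    linarith
  have hsub : ‖h z - 1‖ ≤ 1 / (τ - 1) :=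
    (hb z hz).trans (one_div_le_one_div_of_le (by linarith) (by linarith))
  have hinv : ‖(h z)⁻¹ - 1‖ ≤ 1 / (τ - 1) := by
    convert norm_inv_sub_one_le hτ' (hb z hz) using 1
    field_simp
  calc ‖Wvec (f z * h z) (g z / h z) - Wvec (f z) (g z)‖
      ≤ ‖f z‖ / √2 * (‖h z - 1‖ + ‖g z‖ ^ 2 * ‖(h z)⁻¹ - 1‖) :=
        norm_Wvec_mul_div_sub_Wvec_le _ _ hh
    _ ≤ ‖f z‖ / √2 * (1 / (τ - 1) + ‖g z‖ ^ 2 * (1 / (τ - 1))) := by gcongr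
    _ = ‖Wvec (f z) (g z)‖ / (τ - 1) := by rw [norm_Wvec]; ring

/-- If `h` is nowhere zero on `S`, `τ > 1` and `|h − 1| ≤ 1/τ` on `S`, then the Weierstrass
vectors `φ` of `(f, g)` and `φ̃` of `(f·h, g/h)` satisfy `‖φ̃ − φ‖ ≤ ‖φ‖/(τ − 1)` on `S`. -/
theorem weierstrass_perturbation_close (S : Set ℂ) (f g h : ℂ → ℂ) (τ : ℝ)
    (hτ : 1 < τ) (hh : ∀ z ∈ S, h z ≠ 0)
    (hb : ∀ z ∈ S, ‖h z - 1‖ ≤ 1 / τ) :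
    ∀ z ∈ S, ‖Wvec (f z * h z) (g z / h z) - Wvec (f z) (g z)‖ ≤
      ‖Wvec (f z) (g z)‖ / (τ - 1) :=
  weierstrass_perturbation_close_general S f g h τ hτ hb
end
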